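/- The Bol algebra structure 𝔅₀₂ on ℂ⁴, given by [e₁,e₂]=e₃, [e₁,e₃]=e₄, [e₁,e₂,e₃]=e₄, [e₂,e₃,e₁]=−(1/2)e₄, [e₁,e₃,e₂]=(1/2)e₄, [e₂,e₃,e₂]=e₄, degenerates to the structure 𝔅₀₁ given by [e₁,e₂]=e₃, [e₁,e₂,e₃]=e₄, [e₂,e₃,e₁]=−(1/2)e₄, [e₁,e₃,e₂]=(1/2)e₄, [e₂,e₃,e₂]=e₄. -/
import Mathlib


open Filter Matrix Topology

/-- ℂ⁴ -/
abbrev V4 : Type := Fin 4 → ℂ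

/-- GL₄(ℂ) -/
abbrev GL4 := Matrix.GeneralLinearGroup (Fin 4) ℂ

/-- structure constants of a bilinear map on ℂ⁴: `μ i j` is the value on `(eᵢ, eⱼ)`. -/
abbrev Bil4 := Fin 4 → Fin 4 → V4

/-- structure constants of a trilinear map on ℂ⁴. -/
abbrev Tril4 := Fin 4 → Fin 4 → Fin 4 → V4

/-- standard basis vectors -/
noncomputable def e4 (k : Fin 4) : V4 := Pi.single k (1 : ℂ)

/-- action of `g ∈ GL₄(ℂ)` on a bilinear map: `(g·μ)(x,y) = g μ(g⁻¹x, g⁻¹y)`,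
in structure constants. -/
noncomputable def actBil (g : GL4) (μ : Bil4) : Bil4 := fun i j =>
  (g : Matrix (Fin 4) (Fin 4) ℂ).mulVec
    (∑ p, ∑ q,
      (((g⁻¹ : GL4) : Matrix (Fin 4) (Fin 4) ℂ) p i *
       ((g⁻¹ : GL4) : Matrix (Fin 4) (Fin 4) ℂ) q j) • μ p q)

/-- action of `g ∈ GL₄(ℂ)` on a trilinear map:
`(g·τ)(x,y,z) = g τ(g⁻¹x, g⁻¹y, g⁻¹z)`, in structure constants. -/
noncomputable def actTril (g : GL4) (τ : Tril4) : Tril4 := fun i j k =>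
  (g : Matrix (Fin 4) (Fin 4) ℂ).mulVec
    (∑ p, ∑ q, ∑ r,
      (((g⁻¹ : GL4) : Matrix (Fin 4) (Fin 4) ℂ) p i *
       ((g⁻¹ : GL4) : Matrix (Fin 4) (Fin 4) ℂ) q j *
       ((g⁻¹ : GL4) : Matrix (Fin 4) (Fin 4) ℂ) r k) • τ p q r)

/-- `(μ,τ)` degenerates to `(lam,sig)`: there is a curve `g : ℂ∖{0} → GL₄(ℂ)` with
`g(t)·μ → lam` and `g(t)·τ → sig` as `t → 0`. -/
def Degenerates (μ : Bil4) (τ : Tril4) (lam : Bil4) (sig : Tril4) : Prop :=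
  ∃ g : ℂ → GL4,
    Tendsto (fun t => actBil (g t) μ) (𝓝[≠] (0 : ℂ)) (𝓝 lam) ∧
    Tendsto (fun t => actTril (g t) τ) (𝓝[≠] (0 : ℂ)) (𝓝 sig)

noncomputable def μB02 : Bil4 := fun i j =>
  if i = (0 : Fin 4) ∧ j = (1 : Fin 4) then e4 2
  else if i = (1 : Fin 4) ∧ j = (0 : Fin 4) then -(e4 2)
  else if i = (0 : Fin 4) ∧ j = (2 : Fin 4) then e4 3
  else if i = (2 : Fin 4) ∧ j = (0 : Fin 4) then -(e4 3)
  else 0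

noncomputable def τB02 : Tril4 := fun i j k =>
  if i = (0 : Fin 4) ∧ j = (1 : Fin 4) ∧ k = (2 : Fin 4) then e4 3
  else if i = (1 : Fin 4) ∧ j = (0 : Fin 4) ∧ k = (2 : Fin 4) then -(e4 3)
  else if i = (1 : Fin 4) ∧ j = (2 : Fin 4) ∧ k = (0 : Fin 4) then (-(1/2) : ℂ) • e4 3
  else if i = (2 : Fin 4) ∧ j = (1 : Fin 4) ∧ k = (0 : Fin 4) then -((-(1/2) : ℂ) • e4 3)
  else if i = (0 : Fin 4) ∧ j = (2 : Fin 4) ∧ k = (1 : Fin 4) then ((1/2) : ℂ) • e4 3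
  else if i = (2 : Fin 4) ∧ j = (0 : Fin 4) ∧ k = (1 : Fin 4) then -(((1/2) : ℂ) • e4 3)
  else if i = (1 : Fin 4) ∧ j = (2 : Fin 4) ∧ k = (1 : Fin 4) then e4 3
  else if i = (2 : Fin 4) ∧ j = (1 : Fin 4) ∧ k = (1 : Fin 4) then -(e4 3)
  else 0

noncomputable def μB01 : Bil4 := fun i j =>
  if i = (0 : Fin 4) ∧ j = (1 : Fin 4) then e4 2
  else if i = (1 : Fin 4) ∧ j = (0 : Fin 4) then -(e4 2)
  else 0

noncomputable def τB01 : Tril4 := fun i j k =>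
  if i = (0 : Fin 4) ∧ j = (1 : Fin 4) ∧ k = (2 : Fin 4) then e4 3
  else if i = (1 : Fin 4) ∧ j = (0 : Fin 4) ∧ k = (2 : Fin 4) then -(e4 3)
  else if i = (1 : Fin 4) ∧ j = (2 : Fin 4) ∧ k = (0 : Fin 4) then (-(1/2) : ℂ) • e4 3
  else if i = (2 : Fin 4) ∧ j = (1 : Fin 4) ∧ k = (0 : Fin 4) then -((-(1/2) : ℂ) • e4 3)
  else if i = (0 : Fin 4) ∧ j = (2 : Fin 4) ∧ k = (1 : Fin 4) then ((1/2) : ℂ) • e4 3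
  else if i = (2 : Fin 4) ∧ j = (0 : Fin 4) ∧ k = (1 : Fin 4) then -(((1/2) : ℂ) • e4 3)
  else if i = (1 : Fin 4) ∧ j = (2 : Fin 4) ∧ k = (1 : Fin 4) then e4 3
  else if i = (2 : Fin 4) ∧ j = (1 : Fin 4) ∧ k = (1 : Fin 4) then -(e4 3)
  else 0


noncomputable def dvec (t : ℂ) : Fin 4 → ℂ := ![t, t, t^2, t^4]
noncomputable def dinv (t : ℂ) : Fin 4 → ℂ := ![t⁻¹, t⁻¹, (t^2)⁻¹, (t^4)⁻¹]

lemma mul_dd (t : ℂ) (ht : t ≠ 0) : dvec t * dinv t = 1 := by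
  funext i; fin_cases i <;> simp [dvec, dinv] <;> field_simp

lemma mul_dd' (t : ℂ) (ht : t ≠ 0) : dinv t * dvec t = 1 := by
  rw [mul_comm]; exact mul_dd t ht

noncomputable def gmat (t : ℂ) : GL4 :=
  if ht : t = 0 then 1 else
  ⟨Matrix.diagonal (dvec t), Matrix.diagonal (dinv t),
    by rw [Matrix.diagonal_mul_diagonal]; rw [show (fun i => dvec t i * dinv t i) = (1:Fin 4 → ℂ) from mul_dd t ht]; exact Matrix.diagonal_one,
    by rw [Matrix.diagonal_mul_diagonal]; rw [show (fun i => dinv t i * dvec t i) = (1:Fin 4 → ℂ) from mul_dd' t ht]; exact Matrix.diagonal_one⟩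

lemma actBil_diag (t : ℂ) (ht : t ≠ 0) (μ : Bil4) (i j : Fin 4) :
    actBil (gmat t) μ i j = fun k => dvec t k * (dinv t i * dinv t j * μ i j k) := by
  funext k
  simp [actBil, gmat, ht, Matrix.mulVec_diagonal, Matrix.diagonal_apply, ite_mul, zero_mul,
    ite_smul, zero_smul, Finset.sum_ite_eq, Finset.mem_univ]


lemma actTril_diag (t : ℂ) (ht : t ≠ 0) (τ : Tril4) (i j k : Fin 4) :
    actTril (gmat t) τ i j k = fun l => dvec t l * (dinv t i * dinv t j * dinv t k * τ i j k l) := by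
  funext l
  simp [actTril, gmat, ht, Matrix.mulVec_diagonal, Matrix.diagonal_apply, ite_mul, zero_mul,
    ite_smul, zero_smul, Finset.sum_ite_eq, Finset.mem_univ]

noncomputable def corrB : Bil4 := fun i j =>
  if i = (0 : Fin 4) ∧ j = (2 : Fin 4) then e4 3
  else if i = (2 : Fin 4) ∧ j = (0 : Fin 4) then -(e4 3)
  else 0

lemma bil_eq (t : ℂ) (ht : t ≠ 0) :
    actBil (gmat t) μB02 = fun i j k => μB01 i j k + t * corrB i j k := by
  funext i j
  rw [actBil_diag t ht]
  funext k
  fin_cases i <;> fin_cases j <;> fin_cases k <;>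
    simp [μB02, μB01, corrB, e4, dvec, dinv, Pi.single_apply] <;>
    field_simp <;> ring
set_option maxHeartbeats 2000000 in
lemma tril_eq (t : ℂ) (ht : t ≠ 0) : actTril (gmat t) τB02 = τB01 := by
  funext i j k
  rw [actTril_diag t ht]
  funext l
  fin_cases i <;> fin_cases j <;> fin_cases k <;> fin_cases l <;>
    simp [τB02, τB01, e4, dvec, dinv, Pi.single_apply] <;>
    field_simp <;> (first | ring1 | (rw [div_eq_one_iff_eq (by simp [mul_eq_zero, pow_eq_zero_iff, ht])]; ring))

/-- 𝔅₀₂ degenerates to 𝔅₀₁. -/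
theorem stmt12 : Degenerates μB02 τB02 μB01 τB01 := by
  refine ⟨gmat, ?_, ?_⟩
  · have h : ∀ᶠ t in 𝓝[≠] (0:ℂ),
        (fun i j k => μB01 i j k + t * corrB i j k) = actBil (gmat t) μB02 := by
      filter_upwards [self_mem_nhdsWithin] with t ht
      exact (bil_eq t ht).symm
    refine Tendsto.congr' h ?_
    have key : Tendsto (fun t : ℂ => fun i j k => μB01 i j k + t * corrB i j k)
        (𝓝 0) (𝓝 μB01) := by
      rw [tendsto_pi_nhds]; intro i
      rw [tendsto_pi_nhds]; intro j
      rw [tendsto_pi_nhds]; intro k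
      have : Tendsto (fun t : ℂ => μB01 i j k + t * corrB i j k) (𝓝 0)
          (𝓝 (μB01 i j k + 0 * corrB i j k)) :=
        (continuous_const.add (continuous_id.mul continuous_const)).tendsto 0
      simpa using this
    exact key.mono_left nhdsWithin_le_nhds
  · have h : ∀ᶠ t in 𝓝[≠] (0:ℂ), (τB01 : Tril4) = actTril (gmat t) τB02 := by
      filter_upwards [self_mem_nhdsWithin] with t ht
      exact (tril_eq t ht).symm
    exact Tendsto.congr' h tendsto_const_nhds
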